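/- Let k ≥ 0 and let i be a power of 2. If G is a hypergraph in class C with maximum degree at most 2d and u is a leaf of T_G such that the full branch ending at u contains i bottom units of power k each, then G can be extended at u (by repeated node splittings) so that in the resulting hypergraph, of maximum degree still at most 2d, every full branch through u contains a bottom unit of power k + log2(i). -/

import Mathlib

/-- The finset of all boolean lists of length `k` (nodes on level `k` of the
complete infinite rooted binary tree). -/
def listsOfLen : ℕ → Finset (List Bool)
  | 0 => {[]}
  | k+1 => (listsOfLen k).image (· ++ [true]) ∪ (listsOfLen k).image (· ++ [false])

/-- The vertex set of the full branch (root-to-`l` path) ending at the node `l`. -/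
def prefixesF (l : List Bool) : Finset (List Bool) :=
  (Finset.range (l.length + 1)).image (fun i => l.take i)

/-- The vertex set of the level-descending path starting at node `p` and
ending at node `p ++ q`. -/
def pathFinset (p q : List Bool) : Finset (List Bool) :=
  (Finset.range (q.length + 1)).image (fun i => p ++ q.take i)

/-- `S` is (the node set of) a rooted binary tree: it contains the root, is
prefix-closed, and every node has either zero or two children. -/
def IsBinTree (S : Finset (List Bool)) : Prop :=
  [] ∈ S ∧ (∀ l ∈ S, ∀ p : List Bool, p <+: l → p ∈ S) ∧
    ∀ l ∈ S, ((l ++ [true]) ∈ S ↔ (l ++ [false]) ∈ S)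

/-- `l` is a leaf of the tree `S`. -/
def IsLeaf (S : Finset (List Bool)) (l : List Bool) : Prop :=
  l ∈ S ∧ (l ++ [true]) ∉ S ∧ (l ++ [false]) ∉ S

/-- The edge `e` is a level-descending path inside the tree `S`. -/
def InTree (S : Finset (List Bool)) (e : Finset (List Bool)) : Prop :=
  ∃ p q : List Bool, (p ++ q) ∈ S ∧ e = pathFinset p q

/-- Degree of vertex `v` in a hypergraph with hyperedge multiset `E`
(counted with multiplicity). -/
def mDegree (E : Multiset (Finset (List Bool))) (v : List Bool) : ℕ :=
  Multiset.countP (fun e => v ∈ e) E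

/-- The number (with multiplicity) of bottom hyperedges of size `L` of the full
branch ending at the leaf `l`: hyperedges contained in the branch and ending at `l`. -/
def bottomCount (E : Multiset (Finset (List Bool))) (l : List Bool) (L : ℕ) : ℕ :=
  Multiset.countP (fun e => l ∈ e ∧ e ⊆ prefixesF l ∧ e.card = L) E

/-- With `d = 2^m`, the full branch ending at leaf `l` contains bottom units of
power `k` whose multiset of lengths is `ls`: a unit of power `k` and length `L`
consists of `2^(m+1+k-L)` hyperedges of size `L` ending at `l`. -/
def HasBottomUnits (m k : ℕ) (E : Multiset (Finset (List Bool))) (l : List Bool)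
    (ls : Multiset ℕ) : Prop :=
  (∀ L ∈ ls, k ≤ L ∧ L ≤ m + 1 + k) ∧
  ∀ L : ℕ, ls.count L * 2 ^ (m + 1 + k - L) ≤ bottomCount E l L

/-!
Graft the complete binary tree of depth `t` below `u` and pair the `2^t` units with its `2^t`
leaves. A unit of size-`L` bottom hyperedges, i.e. `2^(m+1+k-L)` copies of the set of the last
`L` nodes of the branch to `u`, is prolonged down to its leaf, giving `2^(m+1+(k+t)-(L+t))`
hyperedges of size `L + t` there: a unit of power `k + t`. All old hyperedges through `u` are
dropped. On the branch down to `u` the new hyperedges look exactly like the units they come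
from, which are old hyperedges through `u`, so degrees there do not grow; a new node below `u`
lies on at most as many new hyperedges as `u` does.
-/

open Finset

namespace Multiset

variable {α β : Type*}

theorem countP_replicate (p : α → Prop) [DecidablePred p] (n : ℕ) (a : α) :
    countP p (replicate n a) = if p a then n else 0 := by
  split_ifs with h
  · simpa using countP_eq_card (s := replicate n a).2 fun b hb => by rwa [eq_of_mem_replicate hb]
  · exact countP_eq_zero.2 fun b hb => by rwa [eq_of_mem_replicate hb]

theorem countP_bind (p : β → Prop) [DecidablePred p] (s : Multiset α) (f : α → Multiset β) :
    countP p (s.bind f) = (s.map fun a => countP p (f a)).sum := by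
  simp [countP_eq_card_filter, filter_bind, card_bind]

theorem countP_le_countP_of_imp {p q : α → Prop} [DecidablePred p] [DecidablePred q]
    {s : Multiset α} (h : ∀ a ∈ s, p a → q a) : countP p s ≤ countP q s :=
  Quotient.inductionOn s (fun _ h => List.countP_mono_left (by simpa using h)) h

theorem exists_map_fst_eq_and_map_snd_eq {s : Multiset α} {r : Multiset β}
    (h : card s = card r) : ∃ Q : Multiset (α × β), Q.map Prod.fst = s ∧ Q.map Prod.snd = r := by
  have hlen : s.toList.length = r.toList.length := by simpa using h
  refine ⟨s.toList.zip r.toList, ?_, ?_⟩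
  · rw [map_coe, List.map_fst_zip hlen.le, coe_toList]
  · rw [map_coe, List.map_snd_zip hlen.ge, coe_toList]

end Multiset

open Multiset (countP replicate)

section Trees

variable {S T : Finset (List Bool)} {u x : List Bool}

lemma mem_listsOfLen {n : ℕ} : x ∈ listsOfLen n ↔ x.length = n := by
  induction n generalizing x with
  | zero => simp [listsOfLen]
  | succ n ih =>
    induction x using List.reverseRecOn with
    | nil => simp [listsOfLen]
    | append_singleton y b => cases b <;> simp [listsOfLen, ih]

lemma card_listsOfLen (n : ℕ) : #(listsOfLen n) = 2 ^ n := by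
  rw [← Fintype.card_coe, ← Fintype.card_bool, ← card_vector]
  exact Fintype.card_congr (Equiv.subtypeEquivRight fun _ => mem_listsOfLen)

def completeTree (t : ℕ) : Finset (List Bool) :=
  (range (t + 1)).biUnion listsOfLen

lemma mem_completeTree {t : ℕ} : x ∈ completeTree t ↔ x.length ≤ t := by
  simp [completeTree, mem_listsOfLen]

lemma isBinTree_completeTree (t : ℕ) : IsBinTree (completeTree t) := by
  refine ⟨by simp [mem_completeTree], fun l hl p hp => ?_, fun l _ => by simp [mem_completeTree]⟩
  exact mem_completeTree.2 (hp.length_le.trans (mem_completeTree.1 hl))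

lemma length_eq_of_isLeaf_completeTree {t : ℕ} (h : IsLeaf (completeTree t) x) :
    x.length = t := by
  simp only [IsLeaf, mem_completeTree, List.length_append, List.length_singleton] at h
  omega

lemma IsLeaf.eq_of_prefix (hS : IsBinTree S) (hu : IsLeaf S u) (hx : x ∈ S) (hux : u <+: x) :
    x = u := by
  obtain ⟨w, rfl⟩ := hux
  cases w with
  | nil => simp
  | cons b w =>
    have hb : u ++ [b] ∈ S := hS.2.1 _ hx _ ⟨w, by simp⟩
    cases b
    · exact absurd hb hu.2.2
    · exact absurd hb hu.2.1

def graft (S : Finset (List Bool)) (u : List Bool) (T : Finset (List Bool)) :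
    Finset (List Bool) :=
  S ∪ T.image (u ++ ·)

lemma append_mem_graft_iff (hS : IsBinTree S) (hu : IsLeaf S u) (hT : [] ∈ T) :
    u ++ x ∈ graft S u T ↔ x ∈ T := by
  simp only [graft, mem_union, mem_image, List.append_cancel_left_eq, exists_eq_right]
  refine ⟨?_, Or.inr⟩
  rintro (h | h)
  · obtain rfl : x = [] := by simpa using hu.eq_of_prefix hS h (List.prefix_append u x)
    exact hT
  · exact h

lemma mem_graft_of_not_prefix (h : ¬u <+: x) : x ∈ graft S u T ↔ x ∈ S := by
  simp only [graft, mem_union, mem_image, or_iff_left_iff_imp]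
  rintro ⟨y, -, rfl⟩
  exact absurd (List.prefix_append u y) h

lemma isBinTree_graft (hS : IsBinTree S) (hu : IsLeaf S u) (hT : IsBinTree T) :
    IsBinTree (graft S u T) := by
  have hgraft := fun y => append_mem_graft_iff (x := y) hS hu hT.1
  refine ⟨mem_union_left _ hS.1, fun l hl p hp => ?_, fun l hl => ?_⟩
  · by_cases hul : u <+: l
    · obtain ⟨x, rfl⟩ := hul
      rcases List.prefix_or_prefix_of_prefix hp (List.prefix_append u x) with hpu | ⟨y, rfl⟩
      · exact mem_union_left _ (hS.2.1 u hu.1 p hpu)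
      · exact (hgraft y).2 (hT.2.1 x ((hgraft x).1 hl) y ((List.prefix_append_right_inj u).1 hp))
    · exact mem_union_left _ (hS.2.1 l ((mem_graft_of_not_prefix hul).1 hl) p hp)
  · by_cases hul : u <+: l
    · obtain ⟨x, rfl⟩ := hul
      simp only [List.append_assoc, hgraft]
      exact hT.2.2 x ((hgraft x).1 hl)
    · have hchild : ∀ b, l ++ [b] ∈ graft S u T ↔ l ++ [b] ∈ S := fun b => by
        rcases em (u = l ++ [b]) with rfl | hne
        · exact iff_of_true (mem_union_left _ hu.1) hu.1
        · exact mem_graft_of_not_prefix (by simp [List.prefix_concat_iff, hne, hul])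
      rw [hchild, hchild]
      exact hS.2.2 l ((mem_graft_of_not_prefix hul).1 hl)

lemma isLeaf_of_isLeaf_append_graft (hS : IsBinTree S) (hu : IsLeaf S u) (hT : [] ∈ T)
    (h : IsLeaf (graft S u T) (u ++ x)) : IsLeaf T x := by
  simpa only [IsLeaf, List.append_assoc, append_mem_graft_iff hS hu hT] using h

end Trees

section Segments

variable {S S' : Finset (List Bool)} {e : Finset (List Bool)} {l x y : List Bool} {a : ℕ}

lemma mem_prefixesF : y ∈ prefixesF l ↔ y <+: l := by
  simp only [prefixesF, mem_image, mem_range]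
  constructor
  · rintro ⟨i, -, rfl⟩
    exact List.take_prefix i l
  · intro h
    exact ⟨y.length, Nat.lt_succ_of_le h.length_le, (List.prefix_iff_eq_take.1 h).symm⟩

lemma card_prefixesF (l : List Bool) : #(prefixesF l) = l.length + 1 := by
  rw [prefixesF, card_image_of_injOn, card_range]
  intro i hi j hj hij
  simp only [coe_range, Set.mem_Iio] at hi hj
  simpa [Nat.min_eq_left, Nat.lt_succ_iff.1 hi, Nat.lt_succ_iff.1 hj] using congrArg List.length hij

lemma mem_pathFinset {p q : List Bool} : y ∈ pathFinset p q ↔ p <+: y ∧ y <+: p ++ q := by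
  simp only [pathFinset, mem_image, mem_range]
  constructor
  · rintro ⟨i, -, rfl⟩
    exact ⟨List.prefix_append p _, (List.prefix_append_right_inj p).2 (List.take_prefix i q)⟩
  · rintro ⟨⟨r, rfl⟩, h⟩
    have hr : r <+: q := (List.prefix_append_right_inj p).1 h
    exact ⟨r.length, Nat.lt_succ_of_le hr.length_le, by rw [← List.prefix_iff_eq_take.1 hr]⟩

lemma card_pathFinset (p q : List Bool) : #(pathFinset p q) = q.length + 1 := by
  rw [pathFinset, card_image_of_injOn, card_range]
  intro i hi j hj hij
  simp only [coe_range, Set.mem_Iio] at hi hj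
  simpa [Nat.min_eq_left, Nat.lt_succ_iff.1 hi, Nat.lt_succ_iff.1 hj] using congrArg List.length hij

lemma InTree.mono (h : S ⊆ S') (he : InTree S e) : InTree S' e :=
  let ⟨p, q, hpq, he⟩ := he
  ⟨p, q, h hpq, he⟩

lemma InTree.mem_of_mem (hS : IsBinTree S) (he : InTree S e) (hy : y ∈ e) : y ∈ S := by
  obtain ⟨p, q, hpq, rfl⟩ := he
  exact hS.2.1 _ hpq y (mem_pathFinset.1 hy).2

def branchSegment (x : List Bool) (a : ℕ) : Finset (List Bool) :=
  pathFinset (x.take a) (x.drop a)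

lemma mem_branchSegment : y ∈ branchSegment x a ↔ x.take a <+: y ∧ y <+: x := by
  rw [branchSegment, mem_pathFinset, List.take_append_drop]

lemma mem_branchSegment_of_prefix (hy : y <+: x) (ha : a ≤ y.length) : y ∈ branchSegment x a :=
  mem_branchSegment.2
    ⟨List.prefix_of_prefix_length_le (List.take_prefix a x) hy (by simp [ha]), hy⟩

lemma card_branchSegment (x : List Bool) (a : ℕ) : #(branchSegment x a) = x.length - a + 1 := by
  rw [branchSegment, card_pathFinset, List.length_drop]

lemma inTree_branchSegment (hx : x ∈ S) (a : ℕ) : InTree S (branchSegment x a) :=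
  ⟨x.take a, x.drop a, by rwa [List.take_append_drop], rfl⟩

lemma InTree.eq_branchSegment (he : InTree S e) (hl : l ∈ e) (hsub : e ⊆ prefixesF l) :
    e = branchSegment l (l.length + 1 - #e) := by
  obtain ⟨p, q, -, rfl⟩ := he
  have hend : p ++ q <+: l :=
    mem_prefixesF.1 (hsub (mem_pathFinset.2 ⟨List.prefix_append p q, List.prefix_refl _⟩))
  obtain rfl : p ++ q = l := hend.eq_of_length (le_antisymm hend.length_le
    (mem_pathFinset.1 hl).2.length_le)
  simp [branchSegment, card_pathFinset]

end Segments

section Units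

variable {m k : ℕ} {S : Finset (List Bool)} {E : Multiset (Finset (List Bool))}
  {u v : List Bool} {ls : Multiset ℕ} {Q : Multiset (ℕ × List Bool)}

lemma bottomCount_le_count (hE : ∀ e ∈ E, InTree S e) (l : List Bool) (L : ℕ) :
    bottomCount E l L ≤ E.count (branchSegment l (l.length + 1 - L)) := by
  rw [bottomCount, Multiset.count_eq_card_filter_eq, ← Multiset.countP_eq_card_filter]
  refine Multiset.countP_le_countP_of_imp fun e he ⟨hl, hsub, hcard⟩ => ?_
  rw [← hcard]
  exact ((hE e he).eq_branchSegment hl hsub).symm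

lemma one_le_and_le_of_bottomCount_pos {l : List Bool} {L : ℕ} (h : 0 < bottomCount E l L) :
    1 ≤ L ∧ L ≤ l.length + 1 := by
  obtain ⟨e, -, hl, hsub, rfl⟩ := Multiset.countP_pos.1 h
  exact ⟨card_pos.2 ⟨l, hl⟩, card_prefixesF l ▸ card_le_card hsub⟩

lemma HasBottomUnits.one_le_and_le (h : HasBottomUnits m k E u ls) {L : ℕ} (hL : L ∈ ls) :
    1 ≤ L ∧ L ≤ u.length + 1 :=
  one_le_and_le_of_bottomCount_pos <|
    (Nat.mul_pos (Multiset.count_pos.2 hL) (Nat.two_pow_pos _)).trans_le (h.2 L)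

/-- A pair `(L, w) ∈ Q` stands for a unit of power `k` of size-`L` bottom hyperedges at `u`, each
prolonged down to the node `u ++ w`; for `w = []` this is the unit itself. -/
def extendedUnits (m k : ℕ) (u : List Bool) (Q : Multiset (ℕ × List Bool)) :
    Multiset (Finset (List Bool)) :=
  Q.bind fun p => replicate (2 ^ (m + 1 + k - p.1)) (branchSegment (u ++ p.2) (u.length + 1 - p.1))

lemma mem_extendedUnits {e : Finset (List Bool)} :
    e ∈ extendedUnits m k u Q ↔ ∃ p ∈ Q, e = branchSegment (u ++ p.2) (u.length + 1 - p.1) := by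
  simp [extendedUnits, Multiset.mem_replicate]

lemma self_mem_of_mem_extendedUnits (hQ : ∀ p ∈ Q, 1 ≤ p.1) {e : Finset (List Bool)}
    (he : e ∈ extendedUnits m k u Q) : u ∈ e := by
  obtain ⟨p, hp, rfl⟩ := mem_extendedUnits.1 he
  have := hQ p hp
  exact mem_branchSegment_of_prefix (List.prefix_append u p.2) (by omega)

lemma extendedUnits_filter_not_mem (hQ : ∀ p ∈ Q, 1 ≤ p.1) :
    (extendedUnits m k u Q).filter (u ∉ ·) = 0 :=
  Multiset.filter_eq_nil.2 fun _ he hu => hu (self_mem_of_mem_extendedUnits hQ he)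

lemma extendedUnits_le_filter (hE : ∀ e ∈ E, InTree S e) (h : HasBottomUnits m k E u ls) :
    extendedUnits m k u (ls.map (·, [])) ≤ E.filter (u ∈ ·) := by
  classical
  refine Multiset.le_iff_count.2 fun s => ?_
  rw [Multiset.count_filter, extendedUnits, Multiset.bind_map, Multiset.count_bind]
  simp only [List.append_nil, Multiset.count_replicate]
  have hsize : ∀ L ∈ ls, branchSegment u (u.length + 1 - L) = s → L = #s := fun L hL hs => by
    have := h.one_le_and_le hL
    rw [← hs, card_branchSegment]
    omega
  rw [Multiset.sum_map_eq_nsmul_single #s fun L hne hL => if_neg (mt (hsize L hL) hne)]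
  split_ifs with hs hu
  · calc ls.count #s • 2 ^ (m + 1 + k - #s) ≤ bottomCount E u #s := h.2 _
      _ ≤ E.count (branchSegment u (u.length + 1 - #s)) := bottomCount_le_count hE u #s
      _ = E.count s := by rw [hs]
  · have hpos : 0 < #s := by rw [← hs, card_branchSegment]; omega
    rw [← hs] at hu
    exact absurd (mem_branchSegment_of_prefix (List.prefix_refl u) (by omega)) hu
  all_goals simp

lemma countP_mem_extendedUnits_of_prefix (hQ1 : ∀ p ∈ Q, 1 ≤ p.1) (hQ : Q.map Prod.fst = ls)
    (hv : v <+: u) :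
    countP (v ∈ ·) (extendedUnits m k u Q) =
      countP (v ∈ ·) (extendedUnits m k u (ls.map (·, []))) := by
  subst hQ
  simp only [extendedUnits, Multiset.map_map, Multiset.bind_map, Multiset.countP_bind,
    Multiset.countP_replicate, Function.comp_apply, List.append_nil]
  refine congrArg Multiset.sum (Multiset.map_congr rfl fun p hp => ?_)
  have := hQ1 p hp
  simp only [mem_branchSegment, List.take_append_of_le_length (show u.length + 1 - p.1 ≤ u.length
    by omega), hv, hv.trans (List.prefix_append u p.2)]

lemma mDegree_extend_le (hS : IsBinTree S) (hE : ∀ e ∈ E, InTree S e) (hu : IsLeaf S u)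
    (h : HasBottomUnits m k E u ls) (hQ : Q.map Prod.fst = ls) (v : List Bool) :
    mDegree (E.filter (u ∉ ·) + extendedUnits m k u Q) v ≤ max (mDegree E v) (mDegree E u) := by
  have hQ1 : ∀ p ∈ Q, 1 ≤ p.1 := fun p hp =>
    (h.one_le_and_le (hQ ▸ Multiset.mem_map_of_mem Prod.fst hp)).1
  have hF := extendedUnits_le_filter hE h
  rw [mDegree, mDegree, mDegree, Multiset.countP_add]
  by_cases hvu : v <+: u
  · refine le_max_of_le_left ?_
    rw [countP_mem_extendedUnits_of_prefix hQ1 hQ hvu, ← Multiset.countP_add]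
    refine Multiset.countP_le_of_le _ ?_
    calc E.filter (u ∉ ·) + extendedUnits m k u (ls.map (·, []))
        ≤ E.filter (u ∉ ·) + E.filter (u ∈ ·) := add_le_add_right hF _
      _ = E := by rw [add_comm, Multiset.filter_add_not]
  by_cases huv : u <+: v
  · have hold : countP (v ∈ ·) (E.filter (u ∉ ·)) = 0 :=
      Multiset.countP_eq_zero.2 fun e he hve => by
        rw [Multiset.mem_filter] at he
        exact he.2 (hu.eq_of_prefix hS ((hE e he.1).mem_of_mem hS hve) huv ▸ hve)
    refine le_max_of_le_right ?_
    calc countP (v ∈ ·) (E.filter (u ∉ ·)) + countP (v ∈ ·) (extendedUnits m k u Q)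
        ≤ countP (u ∈ ·) (extendedUnits m k u Q) := by
          rw [hold, zero_add]
          exact Multiset.countP_le_countP_of_imp fun e he _ => self_mem_of_mem_extendedUnits hQ1 he
      _ = countP (u ∈ ·) (extendedUnits m k u (ls.map (·, []))) :=
          countP_mem_extendedUnits_of_prefix hQ1 hQ (List.prefix_refl u)
      _ ≤ countP (u ∈ ·) E := Multiset.countP_le_of_le _ (hF.trans (Multiset.filter_le _ _))
  · have hnew : countP (v ∈ ·) (extendedUnits m k u Q) = 0 :=
      Multiset.countP_eq_zero.2 fun e he hve => by
        obtain ⟨p, -, rfl⟩ := mem_extendedUnits.1 he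
        rcases List.prefix_or_prefix_of_prefix (mem_branchSegment.1 hve).2
          (List.prefix_append u p.2) with h' | h'
        exacts [hvu h', huv h']
    rw [hnew, add_zero]
    exact le_max_of_le_left (Multiset.countP_le_of_le _ (Multiset.filter_le _ _))

lemma hasBottomUnits_extendedUnits (E₀ : Multiset (Finset (List Bool))) {L : ℕ} {w : List Bool}
    (hp : (L, w) ∈ Q) (hL : 1 ≤ L ∧ L ≤ u.length + 1) (hk : k ≤ L ∧ L ≤ m + 1 + k) :
    HasBottomUnits m (k + w.length) (E₀ + extendedUnits m k u Q) (u ++ w) {L + w.length} := by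
  refine ⟨by simp; omega, fun L' => ?_⟩
  rw [Multiset.count_singleton]
  split_ifs with hL'
  · subst hL'
    have hbottom : u ++ w ∈ branchSegment (u ++ w) (u.length + 1 - L) ∧
        branchSegment (u ++ w) (u.length + 1 - L) ⊆ prefixesF (u ++ w) ∧
        #(branchSegment (u ++ w) (u.length + 1 - L)) = L + w.length := by
      refine ⟨mem_branchSegment_of_prefix (List.prefix_refl _) (by simp; omega),
        fun y hy => mem_prefixesF.2 (mem_branchSegment.1 hy).2, ?_⟩
      rw [card_branchSegment, List.length_append]
      omega
    calc 1 * 2 ^ (m + 1 + (k + w.length) - (L + w.length))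
        = countP (fun e => u ++ w ∈ e ∧ e ⊆ prefixesF (u ++ w) ∧ #e = L + w.length)
            (replicate (2 ^ (m + 1 + k - L)) (branchSegment (u ++ w) (u.length + 1 - L))) := by
          rw [Multiset.countP_replicate, if_pos hbottom, one_mul]
          congr 1
          omega
      _ ≤ bottomCount (E₀ + extendedUnits m k u Q) (u ++ w) (L + w.length) :=
          Multiset.countP_le_of_le _ ((Multiset.le_bind (f := fun p => replicate
            (2 ^ (m + 1 + k - p.1)) (branchSegment (u ++ p.2) (u.length + 1 - p.1))) Q hp).trans
            (Multiset.le_add_left _ _))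
  · simp

end Units

/-- If the full branch ending at a leaf `u` contains `2^t` bottom units of power
`k`, then the tree hypergraph can be extended at `u`, keeping maximum degree at
most `2d`, so that every full branch through `u` contains a bottom unit of power
`k + t = k + log₂ (2^t)`. -/
theorem merge_units (m k t : ℕ) (S : Finset (List Bool))
    (E : Multiset (Finset (List Bool)))
    (hS : IsBinTree S) (hE : ∀ e ∈ E, InTree S e)
    (hdeg : ∀ v : List Bool, mDegree E v ≤ 2 * 2 ^ m)
    (u : List Bool) (hu : IsLeaf S u)
    (ls : Multiset ℕ) (hcard : ls.card = 2 ^ t)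
    (hunits : HasBottomUnits m k E u ls) :
    ∃ (S' : Finset (List Bool)) (E' : Multiset (Finset (List Bool))),
      S ⊆ S' ∧ IsBinTree S' ∧ (∀ x ∈ S', x ∈ S ∨ u <+: x) ∧
      (∀ e ∈ E', InTree S' e) ∧
      (E'.filter (fun e => u ∉ e) = E.filter (fun e => u ∉ e)) ∧
      (∀ v : List Bool, mDegree E' v ≤ 2 * 2 ^ m) ∧
      (∀ l : List Bool, IsLeaf S' l → u <+: l →
        ∃ L : ℕ, HasBottomUnits m (k + t) E' l {L}) := by
  obtain ⟨Q, hQls, hQw⟩ := Multiset.exists_map_fst_eq_and_map_snd_eq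
    (s := ls) (r := (listsOfLen t).val) (by rw [hcard, card_val, card_listsOfLen])
  have hQ : ∀ p ∈ Q, (1 ≤ p.1 ∧ p.1 ≤ u.length + 1) ∧ (k ≤ p.1 ∧ p.1 ≤ m + 1 + k) ∧
      p.2.length = t := fun p hp =>
    have hL := hQls ▸ Multiset.mem_map_of_mem Prod.fst hp
    ⟨hunits.one_le_and_le hL, hunits.1 _ hL,
      mem_listsOfLen.1 (mem_def.2 (hQw ▸ Multiset.mem_map_of_mem Prod.snd hp))⟩
  refine ⟨graft S u (completeTree t), E.filter (u ∉ ·) + extendedUnits m k u Q,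
    subset_union_left, isBinTree_graft hS hu (isBinTree_completeTree t), ?_, ?_, ?_,
    fun v => (mDegree_extend_le hS hE hu hunits hQls v).trans (max_le (hdeg v) (hdeg u)), ?_⟩
  · simp only [graft, mem_union, mem_image]
    rintro x (hx | ⟨y, -, rfl⟩)
    exacts [Or.inl hx, Or.inr (List.prefix_append u y)]
  · intro e he
    rcases Multiset.mem_add.1 he with he | he
    · exact (hE e (Multiset.mem_of_mem_filter he)).mono subset_union_left
    · obtain ⟨p, hp, rfl⟩ := mem_extendedUnits.1 he
      exact inTree_branchSegment ((append_mem_graft_iff hS hu (isBinTree_completeTree t).1).2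
        (mem_completeTree.2 (hQ p hp).2.2.le)) _
  · rw [Multiset.filter_add, Multiset.filter_filter, extendedUnits_filter_not_mem
      fun p hp => (hQ p hp).1.1, add_zero]
    simp
  · rintro l hl ⟨w, rfl⟩
    have hw := length_eq_of_isLeaf_completeTree
      (isLeaf_of_isLeaf_append_graft hS hu (isBinTree_completeTree t).1 hl)
    obtain ⟨⟨L, w⟩, hp, rfl⟩ := Multiset.mem_map.1 (hQw ▸ mem_def.1 (mem_listsOfLen.2 hw))
    obtain ⟨hL, hk, -⟩ := hQ _ hp
    exact ⟨L + t, hw ▸ hasBottomUnits_extendedUnits _ hp hL hk⟩
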